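/- Let φ ∈ V be a dominant weight, i.e. ⟨φ, α∨⟩ ≥ 0 for all α ∈ Π, and let w ∈ W be X-reduced. Write (φ − wφ) + Σ_{α ∈ I(w)} α = Σ_{α∈Π} c_α α, and suppose its Y-coefficient Σ_{α∈Y} c_α equals j. Then w ∈ W(Y^(j)), the subgroup generated by the simple reflections at simple roots within distance less than j from Y. (Note that (φ − wφ) + Σ_{α∈I(w)} α equals φ − w·φ, where · denotes the dot action of W.) -/

import Mathlib

/-!
A (possibly infinite) reduced crystallographic root system with a fixed system of simple
roots.  Since the simple roots `Π` are linearly independent and every root is a linear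
combination of them, we may coordinatize: the span of `Π` is identified with the free
module `ι →₀ ℚ` on the index set `ι` of simple roots, the simple root indexed by `i`
being `Finsupp.single i 1`.  The coefficients `c_α` of an element `γ = ∑_{α ∈ Π} c_α α`
are then just the values `γ i`, and `supp γ` is `γ.support`.
-/

/-- A reduced crystallographic root system (possibly infinite) together with a chosen set
of simple roots, coordinatized in the basis of simple roots.  The field `coroot α` is the
linear functional `⟨·, α∨⟩` (its values are only constrained for `α ∈ Δ`). -/
structure SimpleRootSystem (ι : Type*) where
  /-- The set of roots. -/
  Δ : Set (ι →₀ ℚ)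
  /-- The coroot pairing `β ↦ ⟨β, α∨⟩`. -/
  coroot : (ι →₀ ℚ) → ((ι →₀ ℚ) →ₗ[ℚ] ℚ)
  /-- Roots are nonzero. -/
  zero_not_mem : (0 : ι →₀ ℚ) ∉ Δ
  /-- `⟨α, α∨⟩ = 2`. -/
  pairing_self : ∀ α ∈ Δ, coroot α α = 2
  /-- Crystallographic: `⟨β, α∨⟩ ∈ ℤ`. -/
  pairing_int : ∀ α ∈ Δ, ∀ β ∈ Δ, ∃ n : ℤ, coroot α β = (n : ℚ)
  /-- The reflection `s_α(β) = β - ⟨β, α∨⟩ α` maps roots to roots. -/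
  reflect_mem : ∀ α ∈ Δ, ∀ β ∈ Δ, β - coroot α β • α ∈ Δ
  /-- Reduced: the only multiples of a root `α` that are roots are `±α`. -/
  reduced : ∀ α ∈ Δ, ∀ c : ℚ, c • α ∈ Δ → c = 1 ∨ c = -1
  /-- Every simple root is a root. -/
  simple_mem : ∀ i : ι, (Finsupp.single i 1 : ι →₀ ℚ) ∈ Δ
  /-- Every root is a linear combination of the simple roots whose coefficients are either
  all nonnegative integers or all nonpositive integers. -/
  coeff_sign : ∀ α ∈ Δ, (∀ i, ∃ n : ℕ, α i = (n : ℚ)) ∨ (∀ i, ∃ n : ℕ, α i = -(n : ℚ))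

namespace SimpleRootSystem

variable {ι : Type*}

/-- The simple root indexed by `i`. -/
noncomputable def simple (i : ι) : ι →₀ ℚ := Finsupp.single i 1

variable (R : SimpleRootSystem ι)

/-- The positive roots `Δ⁺`. -/
def posRoots : Set (ι →₀ ℚ) := {α ∈ R.Δ | ∀ i, 0 ≤ α i}

/-- The negative roots `Δ⁻`. -/
def negRoots : Set (ι →₀ ℚ) := {α ∈ R.Δ | ∀ i, α i ≤ 0}

/-- The reflection `s_α : v ↦ v - ⟨v, α∨⟩ α`, as a linear endomorphism. -/
noncomputable def reflection (α : ι →₀ ℚ) : Module.End ℚ (ι →₀ ℚ) :=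
  LinearMap.id - (R.coroot α).smulRight α

/-- The Weyl group `W`, the group generated by the simple reflections, realized as the
closure of the set of simple reflections inside the endomorphism monoid (each simple
reflection is an involution, so this closure is closed under inverses). -/
noncomputable def weylGroup : Submonoid (Module.End ℚ (ι →₀ ℚ)) :=
  Submonoid.closure {g | ∃ i : ι, g = R.reflection (simple i)}

/-- The length `l(w)`: the least `k` such that `w` is a product of `k` simple
reflections. -/
noncomputable def length (w : Module.End ℚ (ι →₀ ℚ)) : ℕ :=
  sInf {k | ∃ f : Fin k → ι,
    w = (List.ofFn fun j => R.reflection (simple (f j))).prod}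

/-- The inversion set `I(w) = Δ⁺ ∩ w(Δ⁻)`. -/
noncomputable def inversions (w : Module.End ℚ (ι →₀ ℚ)) : Set (ι →₀ ℚ) :=
  R.posRoots ∩ (⇑w '' R.negRoots)

/-- The Dynkin diagram: the graph on the (indices of the) simple roots in which two
distinct simple roots `α ≠ β` are adjacent iff `⟨α, β∨⟩ ≠ 0` (equivalently, in a root
system, `⟨β, α∨⟩ ≠ 0`; we state the symmetrized form). -/
noncomputable def dynkin : SimpleGraph ι where
  Adj i j := i ≠ j ∧
    (R.coroot (simple j) (simple i) ≠ 0 ∨ R.coroot (simple i) (simple j) ≠ 0)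
  symm := ⟨fun _ _ h => ⟨h.1.symm, h.2.symm⟩⟩
  loopless := ⟨fun _ h => h.1 rfl⟩

end SimpleRootSystem

namespace SimpleRootSystem

variable {ι : Type*} (R : SimpleRootSystem ι)

/-- For `X ⊆ Π`, the set `Δ(X)` of roots whose support is contained in `X`. -/
def deltaX (X : Set ι) : Set (ι →₀ ℚ) := {γ ∈ R.Δ | ↑γ.support ⊆ X}

/-- `w` is `X`-reduced if its inversion set contains no root supported in `X`. -/
noncomputable def IsXReduced (X : Set ι) (w : Module.End ℚ (ι →₀ ℚ)) : Prop :=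
  R.inversions w ∩ R.deltaX X = ∅

/-- `Y^(j)`: the set of simple roots at (extended) graph distance less than `j` from
`Y = Π \ X` in the Dynkin diagram. -/
noncomputable def yNbhd (X : Set ι) (j : ℕ) : Set ι :=
  {i | ∃ y, y ∉ X ∧ R.dynkin.edist i y < (j : ℕ∞)}

/-- The subgroup (realized as a submonoid of the endomorphism monoid, as in `weylGroup`)
generated by the simple reflections `s_α` for `α` in a set `s` of simple roots. -/
noncomputable def standardParabolic (s : Set ι) : Submonoid (Module.End ℚ (ι →₀ ℚ)) :=
  Submonoid.closure {g | ∃ i ∈ s, g = R.reflection (simple i)}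

end SimpleRootSystem

/-!
Write `w` as a word in the simple reflections all of whose "inversion-sequence" roots
`s_{i₁} ⋯ s_{i_{k-1}} α_{i_k}` are positive; a shortest word has this property, by the deletion
argument (a negative such root lets one cancel two letters). For such a word of length `l` the
inversion set of `w` consists of exactly these `l` roots, and `φ - wφ` is a nonnegative
combination of them. Each inversion has a coefficient `≥ 1` outside `X`, since `w` is
`X`-reduced, so `l ≤ j`. Finally, take any letter `t` of the word and the set `S` of letters
reachable from `t` through letters of the word in the Dynkin diagram. The first letter `b` of
the word lying in `S` commutes with all earlier letters, so `α_b` is an inversion of `w`, and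
hence `b ∉ X`. A path from `t` to `b` uses distinct letters, so has length `< l ≤ j`.
-/

theorem SimpleGraph.Walk.edist_lt_card_of_support_subset {V : Type*} {G : SimpleGraph V}
    {u v : V} (p : G.Walk u v) {s : Finset V} (hp : ∀ x ∈ p.support, x ∈ s) :
    G.edist u v < s.card := by
  classical
  have hsub : p.bypass.support.toFinset ⊆ s := fun x hx =>
    hp x (p.support_bypass_subset_support (List.mem_toFinset.1 hx))
  have hcard := Finset.card_le_card hsub
  rw [List.toFinset_card_of_nodup p.bypass_isPath.support_nodup, length_support] at hcard
  exact p.bypass.edist_le.trans_lt (by exact_mod_cast hcard)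

namespace SimpleRootSystem

variable {ι : Type*}

noncomputable def yCoeff (X : Set ι) : (ι →₀ ℚ) →ₗ[ℚ] ℚ where
  toFun γ := ∑ᶠ i ∈ Xᶜ, γ i
  map_add' γ δ := finsum_mem_add_distrib' (γ.hasFiniteSupport.subset Set.inter_subset_right)
    (δ.hasFiniteSupport.subset Set.inter_subset_right)
  map_smul' c γ := by
    simp only [Finsupp.smul_apply, smul_eq_mul, RingHom.id_apply]
    exact (mul_finsum_mem _ c).symm

lemma yCoeff_apply (X : Set ι) (γ : ι →₀ ℚ) : yCoeff X γ = ∑ᶠ i ∈ Xᶜ, γ i := rfl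

lemma yCoeff_eq_sum (X : Set ι) [DecidablePred (· ∈ X)] (γ : ι →₀ ℚ) :
    yCoeff X γ = ∑ i ∈ γ.support with i ∉ X, γ i :=
  finsum_mem_eq_sum_of_subset _ (fun i hi => by simp_all) (fun i hi => by simp_all)

lemma yCoeff_nonneg {X : Set ι} {γ : ι →₀ ℚ} (h : 0 ≤ γ) : 0 ≤ yCoeff X γ := by
  classical
  rw [yCoeff_eq_sum]
  exact Finset.sum_nonneg fun i _ => h i

lemma apply_le_yCoeff {X : Set ι} {γ : ι →₀ ℚ} (h : 0 ≤ γ) {k : ι} (hk : k ∉ X) :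
    γ k ≤ yCoeff X γ := by
  classical
  by_cases hγk : γ k = 0
  · exact hγk ▸ yCoeff_nonneg h
  rw [yCoeff_eq_sum]
  exact Finset.single_le_sum (fun i _ => h i) (by simp [hγk, hk])

variable (R : SimpleRootSystem ι)

lemma mem_posRoots {β : ι →₀ ℚ} : β ∈ R.posRoots ↔ β ∈ R.Δ ∧ 0 ≤ β := by
  simp [posRoots, Finsupp.le_def]

lemma mem_negRoots {β : ι →₀ ℚ} : β ∈ R.negRoots ↔ β ∈ R.Δ ∧ β ≤ 0 := by
  simp [negRoots, Finsupp.le_def]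

lemma simple_nonneg (i : ι) : 0 ≤ simple i :=
  Finsupp.single_nonneg.2 zero_le_one

lemma simple_not_nonpos (i : ι) : ¬ simple i ≤ 0 := fun h =>
  absurd (h i) (by simp [simple])

lemma reflection_apply (α v : ι →₀ ℚ) : R.reflection α v = v - R.coroot α v • α := by
  simp [reflection]

lemma simple_mem_Δ (i : ι) : simple i ∈ R.Δ := R.simple_mem i

lemma coroot_simple_self (i : ι) : R.coroot (simple i) (simple i) = 2 :=
  R.pairing_self _ (R.simple_mem_Δ i)

lemma reflection_mem {α β : ι →₀ ℚ} (hα : α ∈ R.Δ) (hβ : β ∈ R.Δ) :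
    R.reflection α β ∈ R.Δ := by
  rw [reflection_apply]
  exact R.reflect_mem α hα β hβ

lemma reflection_simple_self (i : ι) : R.reflection (simple i) (simple i) = -simple i := by
  rw [reflection_apply, coroot_simple_self]
  module

lemma reflection_simple_mul_self (i : ι) :
    R.reflection (simple i) * R.reflection (simple i) = 1 := by
  refine LinearMap.ext fun v => ?_
  simp only [Module.End.mul_apply, reflection_apply, map_sub, map_smul, coroot_simple_self,
    Module.End.one_apply]
  module

lemma neg_mem {β : ι →₀ ℚ} (hβ : β ∈ R.Δ) : -β ∈ R.Δ := by
  simpa [reflection_apply, R.pairing_self β hβ, two_smul] using R.reflection_mem hβ hβ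

lemma nonneg_or_nonpos {β : ι →₀ ℚ} (hβ : β ∈ R.Δ) : 0 ≤ β ∨ β ≤ 0 := by
  rcases R.coeff_sign β hβ with h | h
  · exact Or.inl fun i => by obtain ⟨n, hn⟩ := h i; simp [hn]
  · exact Or.inr fun i => by obtain ⟨n, hn⟩ := h i; simp [hn]

lemma nonpos_iff_not_nonneg {β : ι →₀ ℚ} (hβ : β ∈ R.Δ) : β ≤ 0 ↔ ¬ 0 ≤ β :=
  ⟨fun h h' => R.zero_not_mem (le_antisymm h h' ▸ hβ), (R.nonneg_or_nonpos hβ).resolve_left⟩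

lemma nonneg_of_apply_pos {β : ι →₀ ℚ} (hβ : β ∈ R.Δ) {k : ι} (h : 0 < β k) : 0 ≤ β :=
  (R.nonneg_or_nonpos hβ).resolve_right fun h' => (h' k).not_gt h

lemma nonpos_of_apply_neg {β : ι →₀ ℚ} (hβ : β ∈ R.Δ) {k : ι} (h : β k < 0) : β ≤ 0 :=
  (R.nonneg_or_nonpos hβ).resolve_left fun h' => (h' k).not_gt h

lemma one_le_apply {β : ι →₀ ℚ} (hβ : β ∈ R.Δ) (h : 0 ≤ β) {k : ι} (hk : β k ≠ 0) :
    1 ≤ β k := by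
  rcases R.coeff_sign β hβ with h' | h' <;> obtain ⟨n, hn⟩ := h' k <;> rw [hn] at hk ⊢
  · exact_mod_cast Nat.one_le_iff_ne_zero.2 (by exact_mod_cast hk)
  · have := h k
    simp only [Finsupp.coe_zero, Pi.zero_apply, hn] at this
    exact absurd (by linarith [(n.cast_nonneg : (0 : ℚ) ≤ n)]) hk

lemma one_le_yCoeff {X : Set ι} {β : ι →₀ ℚ} (hβ : β ∈ R.Δ) (h : 0 ≤ β)
    (hX : ¬ ↑β.support ⊆ X) : 1 ≤ yCoeff X β := by
  obtain ⟨k, hk, hkX⟩ := Set.not_subset.1 hX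
  exact (R.one_le_apply hβ h (Finsupp.mem_support_iff.1 hk)).trans (apply_le_yCoeff h hkX)

lemma eq_simple_or_eq_neg_simple {β : ι →₀ ℚ} (hβ : β ∈ R.Δ) {p : ι}
    (h : ∀ k ≠ p, β k = 0) : β = simple p ∨ β = -simple p := by
  have hβp : β = β p • simple p := by
    ext k
    by_cases hk : k = p
    · simp [hk, simple]
    · simp [h k hk, simple, Ne.symm hk]
  rcases R.reduced _ (R.simple_mem_Δ p) (β p) (hβp ▸ hβ) with h1 | h1
  · exact Or.inl (by rw [hβp, h1, one_smul])
  · exact Or.inr (by rw [hβp, h1, neg_one_smul])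

lemma reflection_simple_nonneg {β : ι →₀ ℚ} (hβ : β ∈ R.Δ) (h : 0 ≤ β) {i : ι}
    (hne : β ≠ simple i) : 0 ≤ R.reflection (simple i) β := by
  obtain ⟨k, hki, hk⟩ : ∃ k ≠ i, β k ≠ 0 := by
    by_contra! hzero
    rcases R.eq_simple_or_eq_neg_simple hβ hzero with rfl | rfl
    · exact hne rfl
    · exact simple_not_nonpos i (neg_nonneg.1 h)
  refine R.nonneg_of_apply_pos (R.reflection_mem (R.simple_mem_Δ i) hβ) (k := k) ?_
  simpa [reflection_apply, simple, Finsupp.single_apply, Ne.symm hki] using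
    lt_of_le_of_ne (h k) (Ne.symm hk)

lemma reflection_simple_nonpos {β : ι →₀ ℚ} (hβ : β ∈ R.Δ) (h : β ≤ 0) {i : ι}
    (hne : β ≠ -simple i) : R.reflection (simple i) β ≤ 0 := by
  have := R.reflection_simple_nonneg (R.neg_mem hβ) (neg_nonneg.2 h) (i := i)
    fun h' => hne (by rw [← neg_neg β, h'])
  rwa [map_neg, neg_nonneg] at this

/-- Composing the reflections along `α_p` defined by `f` and by `g` translates `β` by
`(g β - f β) α_p`, whence the iteration. -/
lemma add_smul_simple_mem_of_reflect_mem {p : ι} {f g : (ι →₀ ℚ) →ₗ[ℚ] ℚ}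
    (hf : ∀ β ∈ R.Δ, β - f β • simple p ∈ R.Δ) (hg : ∀ β ∈ R.Δ, β - g β • simple p ∈ R.Δ)
    (hfp : f (simple p) = 2) (hgp : g (simple p) = 2) {β : ι →₀ ℚ} (hβ : β ∈ R.Δ) (n : ℕ) :
    β + (n * (g β - f β)) • simple p ∈ R.Δ := by
  induction n with
  | zero => simpa using hβ
  | succ n ih =>
    convert hf _ (hg _ ih) using 1
    simp only [map_add, map_sub, map_smul, hfp, hgp, smul_eq_mul]
    push_cast
    module

lemma add_smul_simple_apply [DecidableEq ι] (β : ι →₀ ℚ) (t : ℚ) (p k : ι) :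
    (β + t • simple p) k = β k + if p = k then t else 0 := by
  simp [simple, Finsupp.single_apply]

/-- For `t` large, the coordinate `p` of `β + t α_p` is positive and that of `β - t α_p` is
negative, so the other coordinates of `β` are both `≥ 0` and `≤ 0`. -/
lemma eq_simple_or_eq_neg_simple_of_forall_add_smul_mem {β : ι →₀ ℚ} {p : ι} {c : ℚ}
    (hc : c ≠ 0) (h : ∀ n : ℤ, β + (n * c) • simple p ∈ R.Δ) :
    β = simple p ∨ β = -simple p := by
  classical
  obtain ⟨n, hn⟩ := exists_nat_gt (|β p| / |c|)
  have hT := abs_lt.1 ((div_lt_iff₀ (abs_pos.2 hc)).1 hn)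
  obtain ⟨m, hm⟩ : ∃ m : ℤ, (m : ℚ) * c = n * |c| := by
    rcases abs_choice c with h' | h'
    · exact ⟨n, by rw [h']; norm_cast⟩
    · exact ⟨-n, by rw [h']; push_cast; ring⟩
  have hup := h m
  have hdown := h (-m)
  rw [hm] at hup
  rw [Int.cast_neg, neg_mul, hm] at hdown
  have hup' := R.nonneg_of_apply_pos hup (k := p)
    (by rw [add_smul_simple_apply, if_pos rfl]; linarith)
  have hdown' := R.nonpos_of_apply_neg hdown (k := p)
    (by rw [add_smul_simple_apply, if_pos rfl]; linarith)
  refine R.eq_simple_or_eq_neg_simple (by simpa using h 0) fun k hk => le_antisymm ?_ ?_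
  · simpa only [add_smul_simple_apply, if_neg (Ne.symm hk), add_zero, Finsupp.coe_zero,
      Pi.zero_apply] using hdown' k
  · simpa only [add_smul_simple_apply, if_neg (Ne.symm hk), add_zero, Finsupp.coe_zero,
      Pi.zero_apply] using hup' k

lemma eq_coroot_of_reflect_mem {p : ι} {g : (ι →₀ ℚ) →ₗ[ℚ] ℚ}
    (hg : ∀ β ∈ R.Δ, β - g β • simple p ∈ R.Δ) (hgp : g (simple p) = 2) :
    g = R.coroot (simple p) := by
  have hf : ∀ β ∈ R.Δ, β - R.coroot (simple p) β • simple p ∈ R.Δ := fun β hβ =>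
    R.reflect_mem _ (R.simple_mem_Δ p) β hβ
  have hroots : ∀ β ∈ R.Δ, g β = R.coroot (simple p) β := by
    intro β hβ
    by_contra hne
    have hstring : ∀ n : ℤ, β + (n * (g β - R.coroot (simple p) β)) • simple p ∈ R.Δ := by
      intro n
      obtain ⟨k, rfl | rfl⟩ := Int.eq_nat_or_neg n
      · exact_mod_cast R.add_smul_simple_mem_of_reflect_mem hf hg (R.coroot_simple_self p) hgp hβ k
      · convert R.add_smul_simple_mem_of_reflect_mem hg hf hgp (R.coroot_simple_self p) hβ k
          using 3
        push_cast
        ring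
    rcases R.eq_simple_or_eq_neg_simple_of_forall_add_smul_mem (sub_ne_zero.2 hne) hstring
      with rfl | rfl
    · exact hne (by rw [hgp, coroot_simple_self])
    · exact hne (by rw [map_neg, map_neg, hgp, coroot_simple_self])
  refine Finsupp.lhom_ext fun q b => ?_
  rw [show Finsupp.single q b = b • simple q by simp [simple], map_smul, map_smul,
    hroots (simple q) (R.simple_mem_Δ q)]

noncomputable def wordProd (L : List ι) : Module.End ℚ (ι →₀ ℚ) :=
  (L.map fun i => R.reflection (simple i)).prod

@[simp] lemma wordProd_nil : R.wordProd [] = 1 := rfl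

@[simp] lemma wordProd_cons (a : ι) (L : List ι) :
    R.wordProd (a :: L) = R.reflection (simple a) * R.wordProd L := by
  simp [wordProd]

@[simp] lemma wordProd_append (L₁ L₂ : List ι) :
    R.wordProd (L₁ ++ L₂) = R.wordProd L₁ * R.wordProd L₂ := by
  simp [wordProd]

lemma wordProd_reverse_mul (L : List ι) : R.wordProd L.reverse * R.wordProd L = 1 := by
  induction L with
  | nil => rfl
  | cons a L ih =>
    calc R.wordProd (a :: L).reverse * R.wordProd (a :: L)
        = R.wordProd L.reverse * (R.reflection (simple a) * R.reflection (simple a)) *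
            R.wordProd L := by simp [mul_assoc]
      _ = 1 := by rw [reflection_simple_mul_self, mul_one, ih]

lemma wordProd_reverse_apply_wordProd_apply (L : List ι) (v : ι →₀ ℚ) :
    R.wordProd L.reverse (R.wordProd L v) = v := by
  rw [← Module.End.mul_apply, wordProd_reverse_mul, Module.End.one_apply]

lemma wordProd_apply_wordProd_reverse_apply (L : List ι) (v : ι →₀ ℚ) :
    R.wordProd L (R.wordProd L.reverse v) = v := by
  simpa using R.wordProd_reverse_apply_wordProd_apply L.reverse v

lemma wordProd_apply_mem {β : ι →₀ ℚ} (hβ : β ∈ R.Δ) (L : List ι) : R.wordProd L β ∈ R.Δ := by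
  induction L with
  | nil => exact hβ
  | cons a L ih => exact R.reflection_mem (R.simple_mem_Δ a) ih

lemma exists_wordProd_eq {w : Module.End ℚ (ι →₀ ℚ)} (hw : w ∈ R.weylGroup) :
    ∃ L, R.wordProd L = w := by
  induction hw using Submonoid.closure_induction with
  | mem _ h => obtain ⟨i, rfl⟩ := h; exact ⟨[i], by simp⟩
  | one => exact ⟨[], rfl⟩
  | mul _ _ _ _ h₁ h₂ =>
    obtain ⟨L₁, rfl⟩ := h₁
    obtain ⟨L₂, rfl⟩ := h₂
    exact ⟨L₁ ++ L₂, wordProd_append ..⟩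

lemma wordProd_mem_standardParabolic {s : Set ι} {L : List ι} (h : ∀ i ∈ L, i ∈ s) :
    R.wordProd L ∈ R.standardParabolic s :=
  Submonoid.list_prod_mem _ fun _ hg => by
    obtain ⟨i, hi, rfl⟩ := List.mem_map.1 hg
    exact Submonoid.subset_closure ⟨i, h i hi, rfl⟩

/-- `w s_m w⁻¹` is a reflection along `α_p` preserving the roots, so its coroot is that of
`α_p`. -/
lemma wordProd_mul_reflection_simple {M : List ι} {m p : ι}
    (h : R.wordProd M (simple m) = simple p) :
    R.wordProd M * R.reflection (simple m) = R.reflection (simple p) * R.wordProd M := by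
  have hcoroot : (R.coroot (simple m)).comp (R.wordProd M.reverse) = R.coroot (simple p) := by
    refine R.eq_coroot_of_reflect_mem (fun β hβ => ?_) ?_
    · convert R.wordProd_apply_mem
        (R.reflection_mem (R.simple_mem_Δ m) (R.wordProd_apply_mem hβ M.reverse)) M using 1
      rw [reflection_apply, map_sub, map_smul, wordProd_apply_wordProd_reverse_apply, h]
      rfl
    · rw [LinearMap.comp_apply, ← h, wordProd_reverse_apply_wordProd_apply, coroot_simple_self]
  refine LinearMap.ext fun v => ?_
  rw [Module.End.mul_apply, Module.End.mul_apply, reflection_apply, reflection_apply,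
    map_sub, map_smul, h, ← hcoroot, LinearMap.comp_apply,
    wordProd_reverse_apply_wordProd_apply]

/-- `inversionSeq [i₁, …, iₖ]` lists the roots `s_{i₁} ⋯ s_{i_{m-1}} α_{i_m}`. -/
noncomputable def inversionSeq : List ι → List (ι →₀ ℚ)
  | [] => []
  | a :: L => simple a :: (inversionSeq L).map (R.reflection (simple a))

lemma mem_inversionSeq {L : List ι} {β : ι →₀ ℚ} :
    β ∈ R.inversionSeq L ↔ ∃ A b B, L = A ++ b :: B ∧ β = R.wordProd A (simple b) := by
  induction L generalizing β with
  | nil => simp [inversionSeq]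
  | cons a L ih =>
    simp only [inversionSeq, List.mem_cons, List.mem_map, ih]
    constructor
    · rintro (rfl | ⟨γ, ⟨A, b, B, rfl, rfl⟩, rfl⟩)
      · exact ⟨[], a, L, rfl, by simp⟩
      · exact ⟨a :: A, b, B, rfl, by simp⟩
    · rintro ⟨_ | ⟨a', A⟩, b, B, h, rfl⟩ <;> simp only [List.nil_append, List.cons_append,
        List.cons.injEq] at h <;> obtain ⟨rfl, rfl⟩ := h
      · simp
      · exact Or.inr ⟨_, ⟨A, b, B, rfl, rfl⟩, by simp⟩

lemma inversionSeq_concat (L : List ι) (i : ι) :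
    R.inversionSeq (L ++ [i]) = R.inversionSeq L ++ [R.wordProd L (simple i)] := by
  induction L with
  | nil => simp [inversionSeq]
  | cons a L ih => simp [inversionSeq, ih]

lemma length_inversionSeq (L : List ι) : (R.inversionSeq L).length = L.length := by
  induction L with
  | nil => rfl
  | cons a L ih => simp [inversionSeq, ih]

def IsPositiveWord (L : List ι) : Prop := ∀ β ∈ R.inversionSeq L, 0 ≤ β

lemma isPositiveWord_concat_iff {L : List ι} {i : ι} :
    R.IsPositiveWord (L ++ [i]) ↔ R.IsPositiveWord L ∧ 0 ≤ R.wordProd L (simple i) := by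
  simp [IsPositiveWord, inversionSeq_concat, or_imp, forall_and]

lemma exists_suffix_wordProd_apply_eq_simple {β : ι →₀ ℚ} (hβ : β ∈ R.Δ) (h : 0 ≤ β)
    {M : List ι} (hM : R.wordProd M β ≤ 0) :
    ∃ A c B, M = A ++ c :: B ∧ R.wordProd B β = simple c := by
  induction M with
  | nil => exact absurd h ((R.nonpos_iff_not_nonneg hβ).1 hM)
  | cons a M ih =>
    by_cases hneg : R.wordProd M β ≤ 0
    · obtain ⟨A, c, B, rfl, hB⟩ := ih hneg
      exact ⟨a :: A, c, B, rfl, hB⟩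
    by_cases heq : R.wordProd M β = simple a
    · exact ⟨[], a, M, rfl, heq⟩
    have hγ := R.wordProd_apply_mem hβ M
    refine absurd (R.reflection_simple_nonneg hγ ?_ heq) ((R.nonpos_iff_not_nonneg ?_).1 hM)
    · exact (R.nonneg_or_nonpos hγ).resolve_right hneg
    · exact R.wordProd_apply_mem hβ (a :: M)

lemma exists_shorter_of_not_isPositiveWord {L : List ι} (h : ¬ R.IsPositiveWord L) :
    ∃ L', R.wordProd L' = R.wordProd L ∧ L'.length < L.length := by
  simp only [IsPositiveWord, not_forall] at h
  obtain ⟨β, hβ, hneg⟩ := h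
  obtain ⟨A, b, B, rfl, rfl⟩ := R.mem_inversionSeq.1 hβ
  obtain ⟨A₁, c, A₂, rfl, hA₂⟩ := R.exists_suffix_wordProd_apply_eq_simple (R.simple_mem_Δ b)
    (simple_nonneg b) ((R.nonpos_iff_not_nonneg (R.wordProd_apply_mem (R.simple_mem_Δ b) _)).2 hneg)
  refine ⟨A₁ ++ A₂ ++ B, ?_, by simp only [List.length_append, List.length_cons]; omega⟩
  simp only [wordProd_append, wordProd_cons, mul_assoc]
  rw [← mul_assoc (R.wordProd A₂), R.wordProd_mul_reflection_simple hA₂, mul_assoc,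
    ← mul_assoc (R.reflection (simple c)), reflection_simple_mul_self, one_mul]

lemma exists_isPositiveWord (L : List ι) :
    ∃ L', R.wordProd L' = R.wordProd L ∧ R.IsPositiveWord L' := by
  induction hn : L.length using Nat.strong_induction_on generalizing L with
  | _ n ih =>
    by_cases hL : R.IsPositiveWord L
    · exact ⟨L, rfl, hL⟩
    obtain ⟨L', hL', hlt⟩ := R.exists_shorter_of_not_isPositiveWord hL
    obtain ⟨L'', h₁, h₂⟩ := ih _ (hn ▸ hlt) L' rfl
    exact ⟨L'', h₁.trans hL', h₂⟩

lemma mem_inversions_wordProd {L : List ι} {β : ι →₀ ℚ} :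
    β ∈ R.inversions (R.wordProd L) ↔ β ∈ R.Δ ∧ 0 ≤ β ∧ R.wordProd L.reverse β ≤ 0 := by
  simp only [inversions, Set.mem_inter_iff, Set.mem_image, mem_posRoots, mem_negRoots]
  constructor
  · rintro ⟨hβ, γ, ⟨-, hγ⟩, rfl⟩
    exact ⟨hβ.1, hβ.2, by rwa [wordProd_reverse_apply_wordProd_apply]⟩
  · rintro ⟨hβΔ, hβ, hneg⟩
    exact ⟨⟨hβΔ, hβ⟩, _, ⟨R.wordProd_apply_mem hβΔ _, hneg⟩,
      R.wordProd_apply_wordProd_reverse_apply L β⟩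

lemma wordProd_apply_simple_not_mem_inversions (M : List ι) (i : ι) :
    R.wordProd M (simple i) ∉ R.inversions (R.wordProd M) := by
  rw [mem_inversions_wordProd, wordProd_reverse_apply_wordProd_apply]
  exact fun h => simple_not_nonpos i h.2.2

lemma inversions_wordProd_concat {M : List ι} {i : ι} (h : 0 ≤ R.wordProd M (simple i)) :
    R.inversions (R.wordProd (M ++ [i])) =
      insert (R.wordProd M (simple i)) (R.inversions (R.wordProd M)) := by
  ext β
  have hrev : R.wordProd (M ++ [i]).reverse β = R.reflection (simple i) (R.wordProd M.reverse β) :=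
    by simp
  rw [Set.mem_insert_iff, mem_inversions_wordProd, mem_inversions_wordProd, hrev]
  by_cases hγ : R.wordProd M.reverse β = simple i
  · have hβ : β = R.wordProd M (simple i) := by rw [← hγ, wordProd_apply_wordProd_reverse_apply]
    subst hβ
    simp only [true_or, iff_true]
    refine ⟨R.wordProd_apply_mem (R.simple_mem_Δ i) M, h, ?_⟩
    rw [hγ, reflection_simple_self]
    exact neg_nonpos.2 (simple_nonneg i)
  have hne : β ≠ R.wordProd M (simple i) := by
    rintro rfl
    exact hγ (R.wordProd_reverse_apply_wordProd_apply M _)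
  simp only [hne, false_or, and_congr_right_iff]
  intro hβΔ hβ
  have hγΔ := R.wordProd_apply_mem hβΔ M.reverse
  constructor
  · intro hneg
    rw [R.nonpos_iff_not_nonneg hγΔ]
    exact fun hpos => (R.nonpos_iff_not_nonneg (R.reflection_mem (R.simple_mem_Δ i) hγΔ)).1 hneg
      (R.reflection_simple_nonneg hγΔ hpos hγ)
  · refine fun hneg => R.reflection_simple_nonpos hγΔ hneg fun hγ' => ?_
    have : β = -R.wordProd M (simple i) := by
      rw [← map_neg, ← hγ', wordProd_apply_wordProd_reverse_apply]
    exact (R.nonpos_iff_not_nonneg hβΔ).1 (this ▸ neg_nonpos.2 h) hβ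

lemma inversions_wordProd_of_isPositiveWord {L : List ι} (hL : R.IsPositiveWord L) :
    R.inversions (R.wordProd L) = {β | β ∈ R.inversionSeq L} := by
  induction L using List.reverseRecOn with
  | nil =>
    ext β
    rw [mem_inversions_wordProd]
    simp only [Set.mem_ofPred_eq, inversionSeq, List.not_mem_nil, iff_false, List.reverse_nil,
      wordProd_nil, Module.End.one_apply, not_and]
    exact fun hβ h h' => (R.nonpos_iff_not_nonneg hβ).1 h' h
  | append_singleton M i ih =>
    obtain ⟨hM, hi⟩ := R.isPositiveWord_concat_iff.1 hL
    rw [R.inversions_wordProd_concat hi, ih hM, inversionSeq_concat]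
    ext β
    simp [or_comm]

lemma nodup_inversionSeq {L : List ι} (hL : R.IsPositiveWord L) : (R.inversionSeq L).Nodup := by
  induction L using List.reverseRecOn with
  | nil => exact List.nodup_nil
  | append_singleton M i ih =>
    obtain ⟨hM, -⟩ := R.isPositiveWord_concat_iff.1 hL
    rw [inversionSeq_concat, ← List.concat_eq_append]
    refine (ih hM).concat fun hmem => R.wordProd_apply_simple_not_mem_inversions M i ?_
    rwa [R.inversions_wordProd_of_isPositiveWord hM]

lemma finsum_mem_inversions_wordProd {L : List ι} (hL : R.IsPositiveWord L) :
    ∑ᶠ α ∈ R.inversions (R.wordProd L), α = (R.inversionSeq L).sum := by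
  classical
  rw [R.inversions_wordProd_of_isPositiveWord hL, ← List.coe_toFinset, finsum_mem_coe_finset,
    List.sum_toFinset _ (R.nodup_inversionSeq hL), List.map_id']

lemma sub_wordProd_apply_nonneg {L : List ι} (hL : R.IsPositiveWord L) {φ : ι →₀ ℚ}
    (hφ : ∀ i, 0 ≤ R.coroot (simple i) φ) : 0 ≤ φ - R.wordProd L φ := by
  induction L using List.reverseRecOn with
  | nil => simp
  | append_singleton M i ih =>
    obtain ⟨hM, hi⟩ := R.isPositiveWord_concat_iff.1 hL
    have hstep : φ - R.wordProd (M ++ [i]) φ =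
        (φ - R.wordProd M φ) + R.coroot (simple i) φ • R.wordProd M (simple i) := by
      simp only [wordProd_append, wordProd_cons, wordProd_nil, mul_one, Module.End.mul_apply,
        reflection_apply, map_sub, map_smul]
      abel
    rw [hstep]
    exact add_nonneg (ih hM) (smul_nonneg (hφ i) hi)

lemma not_support_subset_of_mem_inversions {X : Set ι} {w : Module.End ℚ (ι →₀ ℚ)}
    (hred : R.IsXReduced X w) {β : ι →₀ ℚ} (hβ : β ∈ R.inversions w) : ¬ ↑β.support ⊆ X :=
  fun h => Set.eq_empty_iff_forall_notMem.1 hred β ⟨hβ, hβ.1.1, h⟩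

lemma length_le_yCoeff {L : List ι} (hL : R.IsPositiveWord L) {φ : ι →₀ ℚ}
    (hφ : ∀ i, 0 ≤ R.coroot (simple i) φ) {X : Set ι} (hred : R.IsXReduced X (R.wordProd L)) :
    (L.length : ℚ) ≤
      yCoeff X ((φ - R.wordProd L φ) + ∑ᶠ α ∈ R.inversions (R.wordProd L), α) := by
  rw [R.finsum_mem_inversions_wordProd hL, map_add, map_list_sum]
  have hφw := yCoeff_nonneg (X := X) (R.sub_wordProd_apply_nonneg hL hφ)
  have hinv : (L.length : ℚ) ≤ ((R.inversionSeq L).map (yCoeff X)).sum := by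
    have := List.card_nsmul_le_sum ((R.inversionSeq L).map (yCoeff X)) (1 : ℚ) fun x hx => by
      obtain ⟨β, hβ, rfl⟩ := List.mem_map.1 hx
      have hβinv : β ∈ R.inversions (R.wordProd L) := by
        rwa [R.inversions_wordProd_of_isPositiveWord hL]
      exact R.one_le_yCoeff hβinv.1.1 ((R.mem_posRoots.1 hβinv.1).2)
        (R.not_support_subset_of_mem_inversions hred hβinv)
    simpa [length_inversionSeq] using this
  linarith

lemma coroot_simple_eq_zero_of_not_adj {a b : ι} (hne : a ≠ b) (h : ¬ R.dynkin.Adj a b) :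
    R.coroot (simple a) (simple b) = 0 := by
  simp only [dynkin, not_and, not_or, not_not] at h
  exact (h hne).2

lemma wordProd_apply_simple_of_forall_not_adj {A : List ι} {b : ι}
    (h : ∀ a ∈ A, a ≠ b ∧ ¬ R.dynkin.Adj a b) : R.wordProd A (simple b) = simple b := by
  induction A with
  | nil => rfl
  | cons a A ih =>
    obtain ⟨hne, hadj⟩ := h a List.mem_cons_self
    rw [wordProd_cons, Module.End.mul_apply, ih fun x hx => h x (List.mem_cons_of_mem a hx),
      reflection_apply, R.coroot_simple_eq_zero_of_not_adj hne hadj, zero_smul, sub_zero]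

lemma exists_simple_mem_inversionSeq {L : List ι} {S : Set ι}
    (hS : ∀ a ∈ L, ∀ b ∈ S, R.dynkin.Adj a b → a ∈ S) (hLS : ∃ t ∈ L, t ∈ S) :
    ∃ b ∈ S, simple b ∈ R.inversionSeq L := by
  classical
  obtain ⟨b, hb⟩ : ∃ b, L.find? (· ∈ S) = some b :=
    Option.isSome_iff_exists.1 (List.find?_isSome.2 (by simpa))
  obtain ⟨hbS, A, B, rfl, hA⟩ := List.find?_eq_some_iff_append.1 hb
  simp only [decide_eq_true_eq, Bool.not_eq_true', decide_eq_false_iff_not] at hbS hA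
  refine ⟨b, hbS, R.mem_inversionSeq.2 ⟨A, b, B, rfl, ?_⟩⟩
  refine (R.wordProd_apply_simple_of_forall_not_adj fun a ha => ⟨?_, ?_⟩).symm
  · exact fun hab => hA a ha (hab ▸ hbS)
  · exact fun hadj => hA a ha (hS a (by simp [ha]) b hbS hadj)

lemma exists_walk_to_compl_of_isXReduced {L : List ι} (hL : R.IsPositiveWord L) {X : Set ι}
    (hred : R.IsXReduced X (R.wordProd L)) {t : ι} (ht : t ∈ L) :
    ∃ y ∉ X, ∃ q : R.dynkin.Walk t y, ∀ v ∈ q.support, v ∈ L := by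
  obtain ⟨b, ⟨q, hq⟩, hb⟩ := R.exists_simple_mem_inversionSeq
    (S := {s | ∃ q : R.dynkin.Walk t s, ∀ v ∈ q.support, v ∈ L})
    (fun a ha b ⟨q, hq⟩ hadj => ⟨q.concat hadj.symm, by simpa [or_imp, forall_and, ha] using hq⟩)
    ⟨t, ht, .nil, by simpa⟩
  refine ⟨b, fun hbX => ?_, q, hq⟩
  refine R.not_support_subset_of_mem_inversions hred (β := simple b) ?_ ?_
  · rwa [R.inversions_wordProd_of_isPositiveWord hL]
  · simpa [simple, Finsupp.support_single] using hbX

end SimpleRootSystem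

open SimpleRootSystem in
/-- **Bounded `Y`-coefficient forces support near `Y`**: let `φ` be a dominant weight
(`⟨φ, α∨⟩ ≥ 0` for every simple root `α`) and `w ∈ W` an `X`-reduced element.  Write
`(φ - wφ) + ∑_{α ∈ I(w)} α = ∑_{α ∈ Π} c_α α` (this equals `φ - w·φ` for the dot
action); if the `Y`-coefficient `∑_{α ∈ Y} c_α` equals `j`, then `w ∈ W(Y^(j))`. -/
theorem SimpleRootSystem.xReduced_mem_parabolic_of_yCoeff {ι : Type*}
    (R : SimpleRootSystem ι) (X : Set ι)
    (φ : ι →₀ ℚ) (hdom : ∀ i : ι, 0 ≤ R.coroot (simple i) φ)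
    (w : Module.End ℚ (ι →₀ ℚ)) (hw : w ∈ R.weylGroup) (hred : R.IsXReduced X w)
    (j : ℕ)
    (hcoeff : (∑ᶠ i ∈ Xᶜ, ((φ - w φ) + ∑ᶠ α ∈ R.inversions w, α) i) = (j : ℚ)) :
    w ∈ R.standardParabolic (R.yNbhd X j) := by
  classical
  obtain ⟨L₀, rfl⟩ := R.exists_wordProd_eq hw
  obtain ⟨L, hL, hLpos⟩ := R.exists_isPositiveWord L₀
  rw [← hL] at hred hcoeff ⊢
  have hlen : L.length ≤ j := by
    have := R.length_le_yCoeff hLpos hdom hred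
    rw [yCoeff_apply, hcoeff] at this
    exact_mod_cast this
  refine R.wordProd_mem_standardParabolic fun t ht => ?_
  obtain ⟨y, hy, q, hq⟩ := R.exists_walk_to_compl_of_isXReduced hLpos hred ht
  have hdist := q.edist_lt_card_of_support_subset (s := L.toFinset) (by simpa using hq)
  exact ⟨y, hy, hdist.trans_le (by exact_mod_cast L.toFinset_card_le.trans hlen)⟩
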